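/- arXiv:1907.13223 — 5 statements merged into one kernel-verified Lean document; each statement's English description precedes it below -/
import Mathlib

section
/- Suppose A > 0 and θ > 0. If the threshold-crossing equation has a solution, i.e. there exists t ∈ ℝ with (A t − B) e^{−τ t} = θ, then −τ (θ/A) e^{τ B/A} ≥ −e^{−1}; in other words, whenever the spike-time equation is solvable, the argument of the Lambert W function in the closed-form spike-time formula is ≥ −e^{−1}. -/
/-! Substituting `θ = (A s − B) e^{−τ s}` turns the Lambert argument into `−x e^{−x}` with
`x = τ (s − B/A)`, and `x e^{−x} ≤ e^{−1}` for every real `x`. -/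

open Real

theorem lambert_arg_eq_neg_mul_exp_neg {τ A B : ℝ} (hA : A ≠ 0) (s : ℝ) :
    -τ * ((A * s - B) * exp (-τ * s) / A) * exp (τ * (B / A)) =
      -(τ * (s - B / A) * exp (-(τ * (s - B / A)))) := by
  rw [show -(τ * (s - B / A)) = -τ * s + τ * (B / A) by ring, exp_add]
  field_simp

theorem lambert_arg_valid_of_solvable_general
    (τ θ : ℝ)
    (A B : ℝ)
    (hApos : 0 < A)
    (hsol : ∃ s : ℝ, (A * s - B) * Real.exp (-τ * s) = θ) :
    -τ * (θ / A) * Real.exp (τ * (B / A)) ≥ -Real.exp (-1) := by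
  obtain ⟨s, rfl⟩ := hsol
  rw [lambert_arg_eq_neg_mul_exp_neg hApos.ne' s, ge_iff_le, neg_le_neg_iff]
  exact mul_exp_neg_le_exp_neg_one _

/-- For `A > 0` and `θ > 0`, if the threshold-crossing equation `(A t − B) e^{−τ t} = θ`
has a solution, then the Lambert `W` argument satisfies `−τ (θ/A) e^{τ B/A} ≥ −e^{−1}`. -/
theorem lambert_arg_valid_of_solvable {ι : Type*} (I : Finset ι) (w t : ι → ℝ)
    (τ θ : ℝ) (hτ : 0 < τ) (hθ : 0 < θ)
    (A B : ℝ)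
    (hA : A = ∑ i ∈ I, w i * Real.exp (τ * t i))
    (hB : B = ∑ i ∈ I, w i * t i * Real.exp (τ * t i))
    (hApos : 0 < A)
    (hsol : ∃ s : ℝ, (A * s - B) * Real.exp (-τ * s) = θ) :
    -τ * (θ / A) * Real.exp (τ * (B / A)) ≥ -Real.exp (-1) :=
  lambert_arg_valid_of_solvable_general τ θ A B hApos hsol
end

section
/- Suppose A > 0, θ > 0, and the peak potential satisfies (A/(τ e)) · e^{−τ B/A} ≥ θ. Then there exists a unique t ≤ t_max = B/A + 1/τ with (A t − B) e^{−τ t} = θ, and this t lies in the interval (B/A, t_max]; it is the earlier of the two potential solutions of the threshold equation (the one on the rising part of the membrane potential). -/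
/-!
On `(-∞, B/A + 1/τ]` the potential `V(x) = (A x - B) e^{-τ x}` has derivative
`(A - τ (A x - B)) e^{-τ x} > 0`, so it increases strictly there, from `V(B/A) = 0` to the peak
value `V(B/A + 1/τ) = A/(τ e) · e^{-τ B/A} ≥ θ`. The intermediate value theorem gives a crossing
in `(B/A, B/A + 1/τ]`, and strict monotonicity makes it the only one left of the peak.
-/

open Real Set

namespace Spike

noncomputable def potential (A B τ x : ℝ) : ℝ := (A * x - B) * exp (-τ * x)

variable {A B τ : ℝ}

theorem hasDerivAt_potential (x : ℝ) :
    HasDerivAt (potential A B τ) ((A - τ * (A * x - B)) * exp (-τ * x)) x := by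
  have hlin : HasDerivAt (fun y => A * y - B) A x := by
    simpa using ((hasDerivAt_id x).const_mul A).sub_const B
  have hexp : HasDerivAt (fun y => exp (-τ * y)) (exp (-τ * x) * -τ) x := by
    simpa using ((hasDerivAt_id x).const_mul (-τ)).exp
  exact (hlin.mul hexp).congr_deriv (by ring)

theorem continuous_potential : Continuous (potential A B τ) := by
  unfold potential; fun_prop

theorem potential_div_eq_zero (hA : A ≠ 0) : potential A B τ (B / A) = 0 := by
  simp [potential, mul_div_cancel₀ B hA]

theorem potential_peak (hA : A ≠ 0) (hτ : τ ≠ 0) :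
    potential A B τ (B / A + 1 / τ) = A / (τ * exp 1) * exp (-τ * (B / A)) := by
  have hlin : A * (B / A + 1 / τ) - B = A / τ := by field_simp; ring
  have harg : -τ * (B / A + 1 / τ) = -τ * (B / A) + -1 := by field_simp; ring
  rw [potential, hlin, harg, exp_add, exp_neg]
  field_simp

theorem strictMonoOn_potential (hA : 0 < A) (hτ : 0 < τ) :
    StrictMonoOn (potential A B τ) (Iic (B / A + 1 / τ)) := by
  refine strictMonoOn_of_deriv_pos (convex_Iic _) continuous_potential.continuousOn ?_
  intro x hx
  rw [interior_Iic, mem_Iio] at hx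
  rw [(hasDerivAt_potential x).deriv]
  have hslope : τ * (A * x - B) < A := by
    have hx' : A * x - B < A / τ := by
      have := mul_lt_mul_of_pos_left hx hA
      rw [mul_add, mul_div_cancel₀ B hA.ne', mul_one_div] at this
      linarith
    calc τ * (A * x - B) < τ * (A / τ) := mul_lt_mul_of_pos_left hx' hτ
      _ = A := mul_div_cancel₀ A hτ.ne'
  exact mul_pos (by linarith) (exp_pos _)

end Spike

theorem rising_solution_exists_unique_general
    (τ θ : ℝ) (hτ : 0 < τ) (hθ : 0 < θ)
    (A B : ℝ)
    (hApos : 0 < A)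
    (hpeak : A / (τ * Real.exp 1) * Real.exp (-τ * (B / A)) ≥ θ) :
    ∃ s : ℝ, (s ≤ B / A + 1 / τ ∧ (A * s - B) * Real.exp (-τ * s) = θ) ∧
      s ∈ Set.Ioc (B / A) (B / A + 1 / τ) ∧
      ∀ s' : ℝ, s' ≤ B / A + 1 / τ → (A * s' - B) * Real.exp (-τ * s') = θ → s' = s := by
  have hθmem :
      θ ∈ Ioc (Spike.potential A B τ (B / A)) (Spike.potential A B τ (B / A + 1 / τ)) := by
    rw [Spike.potential_div_eq_zero hApos.ne', Spike.potential_peak hApos.ne' hτ.ne']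
    exact ⟨hθ, hpeak⟩
  obtain ⟨s, hs, hsθ⟩ := intermediate_value_Ioc (by simp [hτ.le])
    Spike.continuous_potential.continuousOn hθmem
  refine ⟨s, ⟨hs.2, hsθ⟩, hs, fun s' hs' hs'θ => ?_⟩
  exact (Spike.strictMonoOn_potential hApos hτ).injOn hs' hs.2 (hs'θ.trans hsθ.symm)

/-- For `A > 0`, `θ > 0`, and peak potential `(A/(τ e)) e^{−τ B/A} ≥ θ`, there exists a
unique `t ≤ t_max = B/A + 1/τ` with `(A t − B) e^{−τ t} = θ`, and this `t` lies in the
interval `(B/A, t_max]` (the solution on the rising part of the membrane potential). -/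
theorem rising_solution_exists_unique {ι : Type*} (I : Finset ι) (w t : ι → ℝ)
    (τ θ : ℝ) (hτ : 0 < τ) (hθ : 0 < θ)
    (A B : ℝ)
    (hA : A = ∑ i ∈ I, w i * Real.exp (τ * t i))
    (hB : B = ∑ i ∈ I, w i * t i * Real.exp (τ * t i))
    (hApos : 0 < A)
    (hpeak : A / (τ * Real.exp 1) * Real.exp (-τ * (B / A)) ≥ θ) :
    ∃ s : ℝ, (s ≤ B / A + 1 / τ ∧ (A * s - B) * Real.exp (-τ * s) = θ) ∧
      s ∈ Set.Ioc (B / A) (B / A + 1 / τ) ∧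
      ∀ s' : ℝ, s' ≤ B / A + 1 / τ → (A * s' - B) * Real.exp (-τ * s') = θ → s' = s :=
  rising_solution_exists_unique_general τ θ hτ hθ A B hApos hpeak
end

section
/- Suppose A > 0, θ > 0, and the peak potential strictly exceeds the threshold, i.e. (A/(τ e)) · e^{−τ B/A} > θ. Then the equation (A t − B) e^{−τ t} = θ has exactly two real solutions: one in the open interval (B/A, t_max) (on the rising part of the membrane potential) and one in (t_max, ∞) (on the decaying part), where t_max = B/A + 1/τ. -/
/-!
The potential `V t = (A t - B) e^{-τ t}` has derivative `A τ (t_max - t) e^{-τ t}`, so for `A > 0`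
it increases strictly up to `t_max` and decreases strictly afterwards. It vanishes at `B / A`,
exceeds `θ` at `t_max`, and tends to `0 < θ` at `+∞`.
The intermediate value theorem then gives one crossing of `θ` on each side of `t_max`, and
strict monotonicity on each side rules out any further crossing.
-/

open Set Filter Topology Real

theorem exists_two_eq_of_unimodal {f : ℝ → ℝ} (hf : Continuous f) {a c θ L : ℝ} (hac : a < c)
    (hmono : StrictMonoOn f (Iic c)) (hanti : StrictAntiOn f (Ici c))
    (ha : f a < θ) (hc : θ < f c) (hlim : Tendsto f atTop (𝓝 L)) (hL : L < θ) :
    ∃ t₁ t₂ : ℝ, t₁ ∈ Ioo a c ∧ t₂ ∈ Ioi c ∧ f t₁ = θ ∧ f t₂ = θ ∧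
      ∀ s, f s = θ → s = t₁ ∨ s = t₂ := by
  obtain ⟨t₁, ht₁, hft₁⟩ := intermediate_value_Ioo hac.le hf.continuousOn ⟨ha, hc⟩
  obtain ⟨T, hfT, hcT⟩ :=
    ((hlim.eventually_lt_const hL).and (eventually_gt_atTop c)).exists
  obtain ⟨t₂, ht₂, hft₂⟩ := intermediate_value_Ioo' hcT.le hf.continuousOn ⟨hfT, hc⟩
  refine ⟨t₁, t₂, ht₁, ht₂.1, hft₁, hft₂, fun s hs => ?_⟩
  rcases le_or_gt s c with hsc | hsc
  · exact .inl <| hmono.injOn hsc (mem_Iic.2 ht₁.2.le) (hs.trans hft₁.symm)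
  · exact .inr <| hanti.injOn (mem_Ici.2 hsc.le) (mem_Ici.2 ht₂.1.le) (hs.trans hft₂.symm)

noncomputable def membranePotential (A B τ t : ℝ) : ℝ := (A * t - B) * exp (-τ * t)

section

variable {A B τ : ℝ}

theorem continuous_membranePotential : Continuous (membranePotential A B τ) := by
  unfold membranePotential
  fun_prop

theorem hasDerivAt_membranePotential (t : ℝ) :
    HasDerivAt (membranePotential A B τ) ((A - τ * (A * t - B)) * exp (-τ * t)) t := by
  have hlin : HasDerivAt (fun x => A * x - B) A t := by
    simpa using ((hasDerivAt_id t).const_mul A).sub_const B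
  have hexp : HasDerivAt (fun x => exp (-τ * x)) (exp (-τ * t) * -τ) t := by
    simpa using ((hasDerivAt_id t).const_mul (-τ)).exp
  exact (hlin.mul hexp).congr_deriv (by ring)

theorem deriv_membranePotential (hA : A ≠ 0) (hτ : τ ≠ 0) (t : ℝ) :
    deriv (membranePotential A B τ) t = A * τ * (B / A + 1 / τ - t) * exp (-τ * t) := by
  rw [(hasDerivAt_membranePotential t).deriv]
  field_simp
  ring

theorem membranePotential_div (hA : A ≠ 0) : membranePotential A B τ (B / A) = 0 := by
  simp [membranePotential, mul_div_cancel₀ B hA]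

theorem membranePotential_peak (hA : A ≠ 0) (hτ : τ ≠ 0) :
    membranePotential A B τ (B / A + 1 / τ) = A / (τ * exp 1) * exp (-τ * (B / A)) := by
  have hexp : -τ * (B / A + 1 / τ) = -τ * (B / A) + -1 := by field_simp; ring
  rw [membranePotential, hexp, exp_add, exp_neg]
  field_simp
  ring

theorem tendsto_membranePotential_atTop (hτ : 0 < τ) :
    Tendsto (membranePotential A B τ) atTop (𝓝 0) := by
  have hpow (s : ℝ) := tendsto_rpow_mul_exp_neg_mul_atTop_nhds_zero s τ hτ
  have hlim := ((hpow 1).const_mul A).sub ((hpow 0).const_mul B)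
  rw [mul_zero, mul_zero, sub_zero] at hlim
  refine hlim.congr fun t => ?_
  simp only [rpow_one, rpow_zero, membranePotential]
  ring

theorem strictMonoOn_membranePotential (hA : 0 < A) (hτ : 0 < τ) :
    StrictMonoOn (membranePotential A B τ) (Iic (B / A + 1 / τ)) := by
  refine strictMonoOn_of_deriv_pos (convex_Iic _) continuous_membranePotential.continuousOn
    fun t ht => ?_
  rw [interior_Iic, mem_Iio, ← sub_pos] at ht
  rw [deriv_membranePotential hA.ne' hτ.ne']
  positivity

theorem strictAntiOn_membranePotential (hA : 0 < A) (hτ : 0 < τ) :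
    StrictAntiOn (membranePotential A B τ) (Ici (B / A + 1 / τ)) := by
  refine strictAntiOn_of_deriv_neg (convex_Ici _) continuous_membranePotential.continuousOn
    fun t ht => ?_
  rw [interior_Ici, mem_Ioi, ← sub_neg] at ht
  rw [deriv_membranePotential hA.ne' hτ.ne']
  exact mul_neg_of_neg_of_pos (mul_neg_of_pos_of_neg (by positivity) ht) (exp_pos _)

end

theorem two_threshold_solutions_general
    (τ θ : ℝ) (hτ : 0 < τ) (hθ : 0 < θ)
    (A B : ℝ)
    (hApos : 0 < A)
    (hpeak : A / (τ * Real.exp 1) * Real.exp (-τ * (B / A)) > θ) :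
    ∃ t₁ t₂ : ℝ,
      t₁ ∈ Set.Ioo (B / A) (B / A + 1 / τ) ∧
      t₂ ∈ Set.Ioi (B / A + 1 / τ) ∧
      (A * t₁ - B) * Real.exp (-τ * t₁) = θ ∧
      (A * t₂ - B) * Real.exp (-τ * t₂) = θ ∧
      ∀ s : ℝ, (A * s - B) * Real.exp (-τ * s) = θ → s = t₁ ∨ s = t₂ :=
  exists_two_eq_of_unimodal continuous_membranePotential
    (lt_add_of_pos_right _ (one_div_pos.2 hτ))
    (strictMonoOn_membranePotential hApos hτ) (strictAntiOn_membranePotential hApos hτ)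
    (by rwa [membranePotential_div hApos.ne'])
    (by rwa [membranePotential_peak hApos.ne' hτ.ne'])
    (tendsto_membranePotential_atTop hτ) hθ

/-- For `A > 0`, `θ > 0`, if the peak potential strictly exceeds the threshold,
`(A/(τ e)) e^{−τ B/A} > θ`, then `(A t − B) e^{−τ t} = θ` has exactly two real solutions:
one in `(B/A, t_max)` (rising part) and one in `(t_max, ∞)` (decaying part),
where `t_max = B/A + 1/τ`. -/
theorem two_threshold_solutions {ι : Type*} (I : Finset ι) (w t : ι → ℝ)
    (τ θ : ℝ) (hτ : 0 < τ) (hθ : 0 < θ)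
    (A B : ℝ)
    (hA : A = ∑ i ∈ I, w i * Real.exp (τ * t i))
    (hB : B = ∑ i ∈ I, w i * t i * Real.exp (τ * t i))
    (hApos : 0 < A)
    (hpeak : A / (τ * Real.exp 1) * Real.exp (-τ * (B / A)) > θ) :
    ∃ t₁ t₂ : ℝ,
      t₁ ∈ Set.Ioo (B / A) (B / A + 1 / τ) ∧
      t₂ ∈ Set.Ioi (B / A + 1 / τ) ∧
      (A * t₁ - B) * Real.exp (-τ * t₁) = θ ∧
      (A * t₂ - B) * Real.exp (-τ * t₂) = θ ∧
      ∀ s : ℝ, (A * s - B) * Real.exp (-τ * s) = θ → s = t₁ ∨ s = t₂ :=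
  two_threshold_solutions_general τ θ hτ hθ A B hApos hpeak
end

section
/- Fix j ∈ I and let t_out ∈ ℝ satisfy V(t_out) = θ. Suppose g : ℝ → ℝ is differentiable at w_j with g(w_j) = t_out, and for all w in a neighborhood of w_j it holds that Σ_{i∈I, i≠j} w_i (g(w) − t_i) e^{τ(t_i − g(w))} + w (g(w) − t_j) e^{τ(t_j − g(w))} = θ (i.e., g(w) is the spike time when the weight of input j is w). If A + τ(B − A t_out) ≠ 0, then the derivative of the spike time with respect to the weight w_j is g'(w_j) = e^{τ t_j} (t_j − t_out) / (A + τ(B − A t_out)). -/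
/-! Implicit differentiation. The potential is affine in the weight `v` of input `j`, say
`P + v Q`, and along `v ↦ g v` it stays at the threshold, so `g' (P' + w_j Q') + Q = 0` at
`t_out`. Here `P' + w_j Q' = V'(t_out) = e^{-τ t_out} (A + τ (B - A t_out))` and
`Q(t_out) = (t_out - t_j) e^{τ (t_j - t_out)}`; cancelling `e^{-τ t_out}` gives the formula. -/

open Real Filter Topology

theorem mul_deriv_eq_neg_of_eventually_add_mul_eq {P Q g : ℝ → ℝ} {x P' Q' θ : ℝ}
    (hP : HasDerivAt P P' (g x)) (hQ : HasDerivAt Q Q' (g x)) (hg : DifferentiableAt ℝ g x)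
    (h : ∀ᶠ v in 𝓝 x, P (g v) + v * Q (g v) = θ) :
    deriv g x * (P' + x * Q') = -Q (g x) := by
  have hsum : HasDerivAt (fun v => P (g v) + v * Q (g v))
      (P' * deriv g x + (1 * Q (g x) + x * (Q' * deriv g x))) x :=
    (hP.comp x hg.hasDerivAt).add ((hasDerivAt_id x).mul (hQ.comp x hg.hasDerivAt))
  have hconst : HasDerivAt (fun v => P (g v) + v * Q (g v)) 0 x :=
    (hasDerivAt_const x θ).congr_of_eventuallyEq h
  linear_combination hsum.unique hconst

/-- In this notation `V t = ∑ i ∈ I, w i * alphaKernel τ (t i) t`. -/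
noncomputable def alphaKernel (τ s t : ℝ) : ℝ := (t - s) * exp (τ * (s - t))

theorem hasDerivAt_alphaKernel (τ s t : ℝ) :
    HasDerivAt (alphaKernel τ s) (exp (τ * (s - t)) * (1 - τ * (t - s))) t := by
  have h := ((hasDerivAt_id' t).sub_const s).fun_mul
    (((hasDerivAt_id' t).const_sub s).const_mul τ).exp
  exact h.congr_deriv (by ring)

theorem sum_mul_exp_mul_one_sub {ι : Type*} (I : Finset ι) (w t : ι → ℝ) (τ u : ℝ) :
    ∑ i ∈ I, w i * (exp (τ * (t i - u)) * (1 - τ * (u - t i))) =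
      exp (-(τ * u)) * ((∑ i ∈ I, w i * exp (τ * t i)) +
        τ * ((∑ i ∈ I, w i * t i * exp (τ * t i)) - (∑ i ∈ I, w i * exp (τ * t i)) * u)) := by
  have hterm : ∀ i ∈ I, w i * (exp (τ * (t i - u)) * (1 - τ * (u - t i))) =
      exp (-(τ * u)) * ((1 - τ * u) * (w i * exp (τ * t i)) + τ * (w i * t i * exp (τ * t i))) := by
    intro i _
    rw [show τ * (t i - u) = τ * t i + -(τ * u) by ring, exp_add]
    ring
  rw [Finset.sum_congr rfl hterm, ← Finset.mul_sum, Finset.sum_add_distrib, ← Finset.mul_sum,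
    ← Finset.mul_sum]
  ring

theorem spike_time_deriv_weight_general {ι : Type*} [DecidableEq ι] (I : Finset ι) (w t : ι → ℝ)
    (τ θ : ℝ)
    (A B : ℝ)
    (hA : A = ∑ i ∈ I, w i * Real.exp (τ * t i))
    (hB : B = ∑ i ∈ I, w i * t i * Real.exp (τ * t i))
    (j : ι) (hj : j ∈ I)
    (tout : ℝ)
    (g : ℝ → ℝ) (hg : DifferentiableAt ℝ g (w j)) (hgw : g (w j) = tout)
    (hloc : ∀ᶠ v in nhds (w j),
      (∑ i ∈ I.erase j, w i * (g v - t i) * Real.exp (τ * (t i - g v))) +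
        v * (g v - t j) * Real.exp (τ * (t j - g v)) = θ)
    (hden : A + τ * (B - A * tout) ≠ 0) :
    deriv g (w j) =
      Real.exp (τ * t j) * (t j - tout) / (A + τ * (B - A * tout)) := by
  have hP : HasDerivAt (fun u => ∑ i ∈ I.erase j, w i * alphaKernel τ (t i) u)
      (∑ i ∈ I.erase j, w i * (exp (τ * (t i - tout)) * (1 - τ * (tout - t i)))) (g (w j)) := by
    rw [hgw]
    exact HasDerivAt.fun_sum fun i _ => (hasDerivAt_alphaKernel τ (t i) tout).const_mul (w i)
  have hQ : HasDerivAt (alphaKernel τ (t j))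
      (exp (τ * (t j - tout)) * (1 - τ * (tout - t j))) (g (w j)) :=
    hgw ▸ hasDerivAt_alphaKernel τ (t j) tout
  have hImplicit := mul_deriv_eq_neg_of_eventually_add_mul_eq hP hQ hg <| by
    filter_upwards [hloc] with v hv
    simpa only [alphaKernel, mul_assoc] using hv
  rw [Finset.sum_erase_add I _ hj, sum_mul_exp_mul_one_sub, ← hA, ← hB, hgw, alphaKernel,
    show τ * (t j - tout) = τ * t j + -(τ * tout) by ring, exp_add] at hImplicit
  rw [eq_div_iff hden]
  refine mul_right_cancel₀ (exp_ne_zero (-(τ * tout))) ?_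
  linear_combination hImplicit

/-- Derivative of the spike time with respect to the weight `w j`.  If `g v` is the spike
time when the weight of input `j` is `v` (i.e. it satisfies the threshold equation on a
neighborhood of `w j`), `g (w j) = t_out`, `V (t_out) = θ`, and the denominator
`A + τ(B − A t_out)` is nonzero, then
`g'(w j) = e^{τ t_j} (t_j − t_out) / (A + τ(B − A t_out))`. -/
theorem spike_time_deriv_weight {ι : Type*} [DecidableEq ι] (I : Finset ι) (w t : ι → ℝ)
    (τ θ : ℝ) (hτ : 0 < τ) (hθ : 0 < θ)
    (A B : ℝ)
    (hA : A = ∑ i ∈ I, w i * Real.exp (τ * t i))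
    (hB : B = ∑ i ∈ I, w i * t i * Real.exp (τ * t i))
    (j : ι) (hj : j ∈ I)
    (tout : ℝ)
    (hVout : (∑ i ∈ I, w i * (tout - t i) * Real.exp (τ * (t i - tout))) = θ)
    (g : ℝ → ℝ) (hg : DifferentiableAt ℝ g (w j)) (hgw : g (w j) = tout)
    (hloc : ∀ᶠ v in nhds (w j),
      (∑ i ∈ I.erase j, w i * (g v - t i) * Real.exp (τ * (t i - g v))) +
        v * (g v - t j) * Real.exp (τ * (t j - g v)) = θ)
    (hden : A + τ * (B - A * tout) ≠ 0) :
    deriv g (w j) =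
      Real.exp (τ * t j) * (t j - tout) / (A + τ * (B - A * tout)) :=
  spike_time_deriv_weight_general I w t τ θ A B hA hB j hj tout g hg hgw hloc hden
end

section
/- Fix j ∈ I and let t_out ∈ ℝ satisfy V(t_out) = θ. Suppose h : ℝ → ℝ is differentiable at t_j with h(t_j) = t_out, and for all s in a neighborhood of t_j it holds that Σ_{i∈I, i≠j} w_i (h(s) − t_i) e^{τ(t_i − h(s))} + w_j (h(s) − s) e^{τ(s − h(s))} = θ (i.e., h(s) is the spike time when the presynaptic spike time of input j is s). If A + τ(B − A t_out) ≠ 0, then the derivative of the spike time with respect to the presynaptic spike time t_j is h'(t_j) = w_j e^{τ t_j} (1 + τ(t_j − t_out)) / (A + τ(B − A t_out)). -/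
/-!
Differentiate the threshold equation at `s = t j`: the terms `i ≠ j` depend on `s` only through
`h s`, the `j`-th term through `h s - s`, and the kernel `u ↦ u e^{-τ u}` has derivative
`e^{-τ u} (1 - τ u)`. This gives `h' · Σ_I w_i k'(t_out - t_i) = w_j k'(t_out - t_j)`, and the sum
on the left is `e^{-τ t_out} (A + τ(B - A t_out))`.
-/

open Real Finset

theorem hasDerivAt_mul_sub_mul_exp_mul_sub {f g : ℝ → ℝ} {f' g' x : ℝ} (c τ : ℝ)
    (hf : HasDerivAt f f' x) (hg : HasDerivAt g g' x) :
    HasDerivAt (fun s => c * (f s - g s) * exp (τ * (g s - f s)))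
      ((f' - g') * (c * (exp (τ * (g x - f x)) * (1 + τ * (g x - f x))))) x :=
  (((hf.fun_sub hg).const_mul c).fun_mul ((hg.fun_sub hf).const_mul τ).exp).congr_deriv
    (by ring)

section Potential

variable {ι : Type*} (I : Finset ι) (w t : ι → ℝ) (τ : ℝ)

theorem sum_mul_exp_mul_one_add (p : ℝ) :
    ∑ i ∈ I, w i * (exp (τ * (t i - p)) * (1 + τ * (t i - p))) =
      exp (-(τ * p)) * ((∑ i ∈ I, w i * exp (τ * t i)) +
        τ * ((∑ i ∈ I, w i * t i * exp (τ * t i)) - (∑ i ∈ I, w i * exp (τ * t i)) * p)) := by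
  simp only [sum_mul, ← sum_sub_distrib, mul_sum, ← sum_add_distrib]
  refine sum_congr rfl fun i _ => ?_
  rw [show τ * (t i - p) = τ * t i + -(τ * p) by ring, exp_add]
  ring

variable [DecidableEq ι]

theorem hasDerivAt_potential_update {h : ℝ → ℝ} {h' : ℝ} (j : ι) (hj : j ∈ I)
    (hd : HasDerivAt h h' (t j)) :
    HasDerivAt
      (fun s => (∑ i ∈ I.erase j, w i * (h s - t i) * exp (τ * (t i - h s))) +
        w j * (h s - s) * exp (τ * (s - h s)))
      (h' * ∑ i ∈ I, w i * (exp (τ * (t i - h (t j))) * (1 + τ * (t i - h (t j)))) -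
        w j * (exp (τ * (t j - h (t j))) * (1 + τ * (t j - h (t j))))) (t j) := by
  have hrest : ∀ i ∈ I.erase j, HasDerivAt (fun s => w i * (h s - t i) * exp (τ * (t i - h s)))
      (h' * (w i * (exp (τ * (t i - h (t j))) * (1 + τ * (t i - h (t j)))))) (t j) := fun i _ =>
    (hasDerivAt_mul_sub_mul_exp_mul_sub (w i) τ hd (hasDerivAt_const (t j) (t i))).congr_deriv
      (by ring)
  have hmoved := hasDerivAt_mul_sub_mul_exp_mul_sub (w j) τ hd (hasDerivAt_id' (t j))
  refine ((HasDerivAt.fun_sum hrest).fun_add hmoved).congr_deriv ?_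
  rw [← add_sum_erase I _ hj, ← mul_sum]
  ring

end Potential

theorem spike_time_deriv_time_general {ι : Type*} [DecidableEq ι] (I : Finset ι) (w t : ι → ℝ)
    (τ θ : ℝ)
    (A B : ℝ)
    (hA : A = ∑ i ∈ I, w i * Real.exp (τ * t i))
    (hB : B = ∑ i ∈ I, w i * t i * Real.exp (τ * t i))
    (j : ι) (hj : j ∈ I)
    (tout : ℝ)
    (h : ℝ → ℝ) (hh : DifferentiableAt ℝ h (t j)) (hhw : h (t j) = tout)
    (hloc : ∀ᶠ s in nhds (t j),
      (∑ i ∈ I.erase j, w i * (h s - t i) * Real.exp (τ * (t i - h s))) +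
        w j * (h s - s) * Real.exp (τ * (s - h s)) = θ)
    (hden : A + τ * (B - A * tout) ≠ 0) :
    deriv h (t j) =
      w j * Real.exp (τ * t j) * (1 + τ * (t j - tout)) / (A + τ * (B - A * tout)) := by
  subst hhw
  have hderiv := hasDerivAt_potential_update I w t τ j hj hh.hasDerivAt
  have hzero := hderiv.unique ((hasDerivAt_const (t j) θ).congr_of_eventuallyEq hloc)
  rw [sum_mul_exp_mul_one_add, ← hA, ← hB,
    show τ * (t j - h (t j)) = τ * t j + -(τ * h (t j)) by ring, exp_add] at hzero
  rw [eq_div_iff hden]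
  apply mul_left_cancel₀ (exp_ne_zero (-(τ * h (t j))))
  linear_combination hzero

/-- Derivative of the spike time with respect to the presynaptic spike time `t j`.  If
`h s` is the spike time when the presynaptic spike time of input `j` is `s` (i.e. it
satisfies the threshold equation on a neighborhood of `t j`), `h (t j) = t_out`,
`V (t_out) = θ`, and the denominator `A + τ(B − A t_out)` is nonzero, then
`h'(t j) = w_j e^{τ t_j} (1 + τ(t_j − t_out)) / (A + τ(B − A t_out))`. -/
theorem spike_time_deriv_time {ι : Type*} [DecidableEq ι] (I : Finset ι) (w t : ι → ℝ)
    (τ θ : ℝ) (hτ : 0 < τ) (hθ : 0 < θ)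
    (A B : ℝ)
    (hA : A = ∑ i ∈ I, w i * Real.exp (τ * t i))
    (hB : B = ∑ i ∈ I, w i * t i * Real.exp (τ * t i))
    (j : ι) (hj : j ∈ I)
    (tout : ℝ)
    (hVout : (∑ i ∈ I, w i * (tout - t i) * Real.exp (τ * (t i - tout))) = θ)
    (h : ℝ → ℝ) (hh : DifferentiableAt ℝ h (t j)) (hhw : h (t j) = tout)
    (hloc : ∀ᶠ s in nhds (t j),
      (∑ i ∈ I.erase j, w i * (h s - t i) * Real.exp (τ * (t i - h s))) +
        w j * (h s - s) * Real.exp (τ * (s - h s)) = θ)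
    (hden : A + τ * (B - A * tout) ≠ 0) :
    deriv h (t j) =
      w j * Real.exp (τ * t j) * (1 + τ * (t j - tout)) / (A + τ * (B - A * tout)) :=
  spike_time_deriv_time_general I w t τ θ A B hA hB j hj tout h hh hhw hloc hden
end
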